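/- Let A be an n×n complex matrix with the given block structure. Then det A = (1/(n_1!⋯n_p!)) · Σ_{σ ∈ S_n} ε(σ) · ∏_{(i_1 ⋯ i_r) ≼ σ} Tr( A_{[bl(i_1) bl(i_2)]} A_{[bl(i_2) bl(i_3)]} ⋯ A_{[bl(i_r) bl(i_1)]} ), where the product runs over all cycles (i_1 ⋯ i_r) of σ (fixed points counting as cycles of length 1). -/

import Mathlib

open Matrix

/-- `i` is the minimal element of its `σ`-orbit. -/
def IsOrbitRep {n : ℕ} (σ : Equiv.Perm (Fin n)) (i : Fin n) : Prop :=
  ∀ k ∈ Finset.range n, i ≤ (σ ^ k) i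

instance {n : ℕ} (σ : Equiv.Perm (Fin n)) : DecidablePred (IsOrbitRep σ) := by
  unfold IsOrbitRep; infer_instance

/-- The set of minimal representatives of the cycles of `σ` (one per cycle,
fixed points included as cycles of length 1). -/
def cycleReps {n : ℕ} (σ : Equiv.Perm (Fin n)) : Finset (Fin n) :=
  Finset.univ.filter (IsOrbitRep σ)

/-- The block `A_{[ab]}` of `A`, padded by zeros to an `n × n` matrix.
Traces of products of such padded blocks along a cyclic sequence of compatible
block indices agree with the traces of the products of the genuine rectangular
blocks. -/
def blockPad {ι κ R : Type*} [DecidableEq κ] [Zero R] (bl : ι → κ)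
    (A : Matrix ι ι R) (a b : κ) : Matrix ι ι R :=
  Matrix.of fun i j => if bl i = a ∧ bl j = b then A i j else 0

/-- `Tr(A_{[bl i₁, bl i₂]} ⋯ A_{[bl iᵣ, bl i₁]})` where `(i₁ ⋯ iᵣ)` is the cycle of `σ`
through `i = i₁` (of length `r = minimalPeriod σ i`, `i_{k+1} = σ i_k`). -/
noncomputable def cycleBlockTrace {n p : ℕ} {R : Type*} [CommRing R] (bl : Fin n → Fin p)
    (A : Matrix (Fin n) (Fin n) R) (σ : Equiv.Perm (Fin n)) (i : Fin n) : R :=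
  (((List.range (Function.minimalPeriod (⇑σ) i)).map
      fun k => blockPad bl A (bl ((σ ^ k) i)) (bl ((σ ^ (k + 1)) i))).prod).trace

/-!
Expanding each trace `Tr(A_{[b₁b₂]} ⋯ A_{[b_r b₁]})` as a sum over closed index paths that stay
in the prescribed blocks, and gluing the paths along all cycles of `σ` into one map
`g : Fin n → Fin n`, the product of the cycle traces becomes `∑ g, ∏ x, A (g x) (g (σ x))` over
the block-preserving maps `g` (`bl ∘ g = bl`). Summing with signs over `σ` turns this into
`∑ g, det (A.submatrix g g)`: non-injective `g` contribute `0`, and each of the `∏ a, n_a!`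
block-preserving permutations contributes `det A`.
-/

open Equiv Function Finset

namespace Matrix

section Trace

variable {ι R : Type*} [Fintype ι] [DecidableEq ι] [CommSemiring R]

theorem trace_list_prod_map_range_mul (m : ℕ) (M : ℕ → Matrix ι ι R) (N : Matrix ι ι R) :
    trace (((List.range m).map M).prod * N) =
      ∑ c : Fin (m + 1) → ι,
        (∏ k : Fin m, M k (c k.castSucc) (c k.succ)) * N (c (Fin.last m)) (c 0) := by
  induction m generalizing N with
  | zero =>
    simpa [trace] using ((Equiv.funUnique (Fin 1) ι).symm.sum_comp fun c => N (c 0) (c 0))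
  | succ m ih =>
    rw [List.range_succ, List.map_append, List.prod_append, List.map_singleton,
      List.prod_singleton, Matrix.mul_assoc, ih]
    conv_rhs => rw [← (Fin.snocEquiv fun _ => ι).sum_comp, Fintype.sum_prod_type, sum_comm]
    refine sum_congr rfl fun c _ => ?_
    simp [Fin.prod_univ_castSucc, mul_apply, mul_sum, mul_assoc, Fin.succ_castSucc,
      -Fin.castSucc_succ]

theorem trace_list_prod_map_range (r : ℕ) [NeZero r] (M : ℕ → Matrix ι ι R) :
    trace ((List.range r).map M).prod = ∑ c : Fin r → ι, ∏ k : Fin r, M k (c k) (c (k + 1)) := by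
  obtain ⟨m, rfl⟩ := Nat.exists_eq_succ_of_ne_zero (NeZero.ne r)
  rw [List.range_succ, List.map_append, List.prod_append, List.map_singleton,
    List.prod_singleton, trace_list_prod_map_range_mul]
  refine sum_congr rfl fun c _ => ?_
  simp [Fin.prod_univ_castSucc, Fin.coeSucc_eq_succ]

end Trace

section Det

variable {α R : Type*} [Fintype α] [DecidableEq α] [CommRing R] (A : Matrix α α R)

theorem sum_sign_mul_prod_comp_eq_det_submatrix (g : α → α) :
    ∑ σ : Perm α, (Perm.sign σ : R) * ∏ x, A (g x) (g (σ x)) = det (A.submatrix g g) := by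
  rw [← det_transpose, det_apply']
  rfl

theorem det_submatrix_self_eq_zero_of_not_injective {g : α → α} (hg : ¬ Injective g) :
    det (A.submatrix g g) = 0 := by
  obtain ⟨x, y, hxy, hne⟩ := not_injective_iff.1 hg
  exact det_zero_of_row_eq hne (funext fun z => by simp [hxy])

theorem sum_det_submatrix_of_comp_eq {ι : Type*} [DecidableEq ι] (f : α → ι) :
    ∑ g : α → α with f ∘ g = f, det (A.submatrix g g) =
      Fintype.card {e : Perm α // f ∘ e = f} * det A := by
  rw [sum_filter, ← Fintype.sum_of_injective (fun e : Perm α => (e : α → α))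
    DFunLike.coe_injective _ _ ?_ fun _ => rfl]
  · simp only [det_submatrix_equiv_self, ← sum_filter, sum_const, nsmul_eq_mul,
      Fintype.card_subtype]
  · intro g hg
    have hg : ¬ Injective g := fun hinj =>
      hg ⟨Equiv.ofBijective g (Finite.injective_iff_bijective.1 hinj), rfl⟩
    simp [det_submatrix_self_eq_zero_of_not_injective A hg]

end Det

end Matrix

namespace Equiv.Perm

variable {α : Type*} (σ : Perm α)

instance neZero_minimalPeriod [Finite α] (x : α) : NeZero (minimalPeriod σ x) :=
  ⟨(minimalPeriod_pos_of_mem_periodicPts (σ.injective.mem_periodicPts x)).ne'⟩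

theorem pow_mod_minimalPeriod_apply (x : α) (k : ℕ) :
    (σ ^ (k % minimalPeriod σ x)) x = (σ ^ k) x := by
  simp only [coe_pow, iterate_mod_minimalPeriod_eq]

theorem pow_fin_add_one_apply [Finite α] (x : α) (k : Fin (minimalPeriod σ x)) :
    (σ ^ ((k + 1 : Fin (minimalPeriod σ x)) : ℕ)) x = σ ((σ ^ (k : ℕ)) x) := by
  rw [Fin.val_add, Fin.val_one', Nat.add_mod_mod, pow_mod_minimalPeriod_apply, pow_succ', mul_apply]

theorem injective_pow_fin_apply (x : α) :
    Injective fun k : Fin (minimalPeriod σ x) => (σ ^ (k : ℕ)) x := fun k l h =>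
  Fin.ext <| iterate_injOn_Iio_minimalPeriod k.2 l.2 (by simpa only [coe_pow] using h)

theorem SameCycle.exists_fin_minimalPeriod_pow_eq [Finite α] {σ : Perm α} {x y : α}
    (h : σ.SameCycle x y) :
    ∃ k : Fin (minimalPeriod σ x), (σ ^ (k : ℕ)) x = y := by
  obtain ⟨k, rfl⟩ := h.exists_nat_pow_eq
  exact ⟨⟨k % _, Nat.mod_lt _ (NeZero.pos _)⟩, pow_mod_minimalPeriod_apply σ x k⟩

end Equiv.Perm

section CycleReps

variable {n : ℕ} {σ : Perm (Fin n)}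

theorem IsOrbitRep.le_of_sameCycle {i j : Fin n} (hi : IsOrbitRep σ i) (h : σ.SameCycle i j) :
    i ≤ j := by
  obtain ⟨k, rfl⟩ := h.exists_fin_minimalPeriod_pow_eq
  exact hi k (mem_range.2 <| k.2.trans_le <|
    (minimalPeriod_le_card (f := σ) (x := i)).trans_eq (Fintype.card_fin n))

theorem IsOrbitRep.eq_of_sameCycle {i j : Fin n} (hi : IsOrbitRep σ i) (hj : IsOrbitRep σ j)
    (h : σ.SameCycle i j) : i = j :=
  (hi.le_of_sameCycle h).antisymm (hj.le_of_sameCycle h.symm)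

variable (σ)

theorem exists_isOrbitRep_sameCycle (x : Fin n) : ∃ i, IsOrbitRep σ i ∧ σ.SameCycle i x := by
  let orbit := univ.filter (σ.SameCycle x)
  have hx : x ∈ orbit := by simp [orbit, Perm.SameCycle.rfl]
  have hmin : σ.SameCycle x (orbit.min' ⟨x, hx⟩) := by
    simpa [orbit] using orbit.min'_mem ⟨x, hx⟩
  refine ⟨orbit.min' ⟨x, hx⟩, fun k _ => orbit.min'_le _ ?_, hmin.symm⟩
  simpa [orbit] using hmin

noncomputable def cycleRepsSigmaEquiv : (Σ i : cycleReps σ, Fin (minimalPeriod σ i)) ≃ Fin n :=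
  Equiv.ofBijective (fun s => (σ ^ (s.2 : ℕ)) s.1) <| by
    refine ⟨?_, fun x => ?_⟩
    · rintro ⟨⟨i, hi⟩, k⟩ ⟨⟨j, hj⟩, l⟩ h
      simp only [cycleReps, mem_filter, mem_univ, true_and] at hi hj h
      obtain rfl : i = j := hi.eq_of_sameCycle hj <| by
        rw [← Perm.sameCycle_pow_right (n := l), ← h]
        exact Perm.sameCycle_pow_right.2 .rfl
      obtain rfl : k = l := σ.injective_pow_fin_apply i h
      rfl
    · obtain ⟨i, hi, hix⟩ := exists_isOrbitRep_sameCycle σ x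
      obtain ⟨k, hk⟩ := hix.exists_fin_minimalPeriod_pow_eq
      exact ⟨⟨⟨i, by simpa [cycleReps] using hi⟩, k⟩, hk⟩

theorem prod_cycleReps_prod_pow_apply {M : Type*} [CommMonoid M] (f : Fin n → M) :
    ∏ i : cycleReps σ, ∏ k : Fin (minimalPeriod σ i), f ((σ ^ (k : ℕ)) i) = ∏ x, f x := by
  rw [← Fintype.prod_sigma'
    fun (i : cycleReps σ) (k : Fin (minimalPeriod σ i)) => f ((σ ^ (k : ℕ)) i)]
  exact (cycleRepsSigmaEquiv σ).prod_comp f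

end CycleReps

section BlockTraces

variable {n p : ℕ} {R : Type*} [CommRing R] (bl : Fin n → Fin p) (A : Matrix (Fin n) (Fin n) R)
  (σ : Perm (Fin n))

theorem cycleBlockTrace_eq_sum (i : Fin n) :
    cycleBlockTrace bl A σ i = ∑ c : Fin (minimalPeriod σ i) → Fin n,
      ∏ k : Fin (minimalPeriod σ i),
        blockPad bl A (bl ((σ ^ (k : ℕ)) i)) (bl (σ ((σ ^ (k : ℕ)) i))) (c k) (c (k + 1)) := by
  simp only [cycleBlockTrace, trace_list_prod_map_range, pow_succ', Perm.mul_apply]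

theorem prod_cycleBlockTrace :
    ∏ i ∈ cycleReps σ, cycleBlockTrace bl A σ i =
      ∑ g : Fin n → Fin n with bl ∘ g = bl, ∏ x, A (g x) (g (σ x)) := by
  let paths : (Fin n → Fin n) ≃ ((i : cycleReps σ) → Fin (minimalPeriod σ i) → Fin n) :=
    (arrowCongr (cycleRepsSigmaEquiv σ) (Equiv.refl _)).symm.trans (piCurry fun _ _ => Fin n)
  have paths_apply (g : Fin n → Fin n) (i : cycleReps σ) (k : Fin (minimalPeriod σ i)) :
      paths g i k = g ((σ ^ (k : ℕ)) i) := rfl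
  calc ∏ i ∈ cycleReps σ, cycleBlockTrace bl A σ i
      = ∑ g : Fin n → Fin n, ∏ x, blockPad bl A (bl x) (bl (σ x)) (g x) (g (σ x)) := by
        simp_rw [cycleBlockTrace_eq_sum]
        rw [← prod_coe_sort, Fintype.prod_sum, ← paths.sum_comp]
        refine sum_congr rfl fun g _ => ?_
        rw [← prod_cycleReps_prod_pow_apply σ]
        simp only [paths_apply, σ.pow_fin_add_one_apply]
    _ = ∑ g : Fin n → Fin n with bl ∘ g = bl, ∏ x, A (g x) (g (σ x)) := by
        rw [sum_filter]
        refine sum_congr rfl fun g _ => ?_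
        have block_preserving : (∀ x, bl (g x) = bl x ∧ bl (g (σ x)) = bl (σ x)) ↔ bl ∘ g = bl :=
          ⟨fun h => funext fun x => (h x).1, fun h x => ⟨congrFun h x, congrFun h (σ x)⟩⟩
        simp only [blockPad, of_apply, Fintype.prod_ite_zero, block_preserving]

end BlockTraces

theorem sum_sign_mul_prod_cycleBlockTrace {n p : ℕ} {R : Type*} [CommRing R] (bl : Fin n → Fin p)
    (A : Matrix (Fin n) (Fin n) R) :
    ∑ σ : Perm (Fin n), (Perm.sign σ : R) * ∏ i ∈ cycleReps σ, cycleBlockTrace bl A σ i =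
      (∏ a, (Fintype.card {i // bl i = a}).factorial : ℕ) * A.det := by
  simp_rw [prod_cycleBlockTrace, mul_sum]
  rw [sum_comm]
  simp_rw [sum_sign_mul_prod_comp_eq_det_submatrix]
  rw [sum_det_submatrix_of_comp_eq, DomMulAct.stabilizer_card]

theorem det_blockMatrix_eq_inv_factorials_sum_sign_prod_blockTraces_general
    (p : ℕ) (nv : Fin p → ℕ)
    (n : ℕ)
    (bl : Fin n → Fin p)
    (hcard : ∀ a, (Finset.univ.filter fun i => bl i = a).card = nv a)
    (A : Matrix (Fin n) (Fin n) ℂ) :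
    A.det = (1 / ∏ a, ((nv a).factorial : ℂ)) *
      ∑ σ : Equiv.Perm (Fin n),
        ((Equiv.Perm.sign σ : ℤ) : ℂ) *
          ∏ i ∈ cycleReps σ, cycleBlockTrace bl A σ i := by
  have fiber_card (a : Fin p) : Fintype.card {i // bl i = a} = nv a := by
    rw [Fintype.card_subtype, hcard]
  rw [sum_sign_mul_prod_cycleBlockTrace]
  simp only [fiber_card, Nat.cast_prod, one_div]
  exact (inv_mul_cancel_left₀ (prod_ne_zero_iff.2 fun a _ =>
    Nat.cast_ne_zero.2 (nv a).factorial_ne_zero) _).symm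

/-- Determinant of a complex block matrix as a signed sum over
permutations of products, over the cycles of each permutation, of traces of
products of blocks along the cycle. The partition of `{1,…,n}` into consecutive
intervals `I₁,…,I_p` with `|I_a| = n_a` is encoded by the monotone map
`bl : Fin n → Fin p` whose fibers have cardinalities `nv a`. -/
theorem det_blockMatrix_eq_inv_factorials_sum_sign_prod_blockTraces
    (p : ℕ) (hp : 1 ≤ p) (nv : Fin p → ℕ) (hnv : ∀ a, 1 ≤ nv a)
    (n : ℕ) (hn : n = ∑ a, nv a)
    (bl : Fin n → Fin p) (hbl : Monotone bl)
    (hcard : ∀ a, (Finset.univ.filter fun i => bl i = a).card = nv a)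
    (A : Matrix (Fin n) (Fin n) ℂ) :
    A.det = (1 / ∏ a, ((nv a).factorial : ℂ)) *
      ∑ σ : Equiv.Perm (Fin n),
        ((Equiv.Perm.sign σ : ℤ) : ℂ) *
          ∏ i ∈ cycleReps σ, cycleBlockTrace bl A σ i :=
  det_blockMatrix_eq_inv_factorials_sum_sign_prod_blockTraces_general p nv n bl hcard A
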